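/- On the homogeneous tree 𝔗_b (b ≥ 2), there exists c > 0 such that for all sufficiently small α > 0, |{x : 𝒰δ_o(x) > α}| ≥ c (1/α) log(1/α). In particular, the uncentred triangular maximal operator 𝒰 is not of weak type (1,1) on 𝔗_b. -/

import Mathlib

open scoped ENNReal NNReal
open Set

/-- A locally finite tree presented via the data induced by a fixed geodesic ray `ω`:
a predecessor map `pred`, a height (Busemann) function `ht` increasing by one along `pred`,
finite successor sets, and connectedness (any two vertices have a common ancestor). -/
structure TreeData (V : Type*) where
  pred : V → V
  ht : V → ℤ
  ht_pred : ∀ x, ht (pred x) = ht x + 1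
  fiber_finite : ∀ x, {y | pred y = x}.Finite
  connected : ∀ x y, ∃ k l : ℕ, pred^[k] x = pred^[l] y

namespace TreeData

variable {V : Type*}

/-- The set of successors of a vertex. -/
def succs (t : TreeData V) (x : V) : Set V := {y | t.pred y = x}

/-- Every vertex has at least 3 neighbours, i.e. at least 2 successors. -/
def Thick (t : TreeData V) : Prop := ∀ x, 2 ≤ (t.succs x).ncard

/-- Homogeneous tree `𝔗_b`: every vertex has exactly `b+1` neighbours, i.e. `b` successors. -/
def Homog (t : TreeData V) (b : ℕ) : Prop := ∀ x, (t.succs x).ncard = b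

/-- The triangle with vertex `x` and height `R`: all descendants of `x` within `R` generations. -/
def tri (t : TreeData V) (x : V) (R : ℕ) : Set V := {y | ∃ j ≤ R, t.pred^[j] y = x}

/-- The base of the triangle with vertex `x` and height `R`: the `R`-fold successors of `x`. -/
def base (t : TreeData V) (x : V) (R : ℕ) : Set V := {y | t.pred^[R] y = x}

/-- The graph distance on the tree. -/
noncomputable def dist (t : TreeData V) (x y : V) : ℕ :=
  sInf {n | ∃ k l : ℕ, k + l = n ∧ t.pred^[k] x = t.pred^[l] y}

/-- Number of points of a set, as an element of `ℝ≥0∞` (counting measure). -/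
noncomputable def esize (E : Set V) : ℝ≥0∞ := ∑' _ : E, (1 : ℝ≥0∞)

/-- The average of `|f|` over a set, with respect to counting measure. -/
noncomputable def setAvg (t : TreeData V) (S : Set V) (f : V → ℝ) : ℝ≥0∞ :=
  (∑' y : S, (‖f y‖₊ : ℝ≥0∞)) / (S.ncard : ℝ≥0∞)

/-- The centred triangular maximal operator `𝒯`. -/
noncomputable def cmax (t : TreeData V) (f : V → ℝ) (x : V) : ℝ≥0∞ :=
  ⨆ R : ℕ, t.setAvg (t.tri x R) f

/-- The uncentred triangular maximal operator `𝒰`. -/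
noncomputable def umax (t : TreeData V) (f : V → ℝ) (x : V) : ℝ≥0∞ :=
  ⨆ (v : V) (R : ℕ) (_ : x ∈ t.tri v R), t.setAvg (t.tri v R) f

/-- The uncentred base maximal operator `ℬᵘ`. -/
noncomputable def ubmax (t : TreeData V) (f : V → ℝ) (x : V) : ℝ≥0∞ :=
  ⨆ (v : V) (R : ℕ) (_ : x ∈ t.tri v R), t.setAvg (t.base v R) f

/-- The modified triangle `T'_r(x) = T_r(x) ∪ {p^r(x)}`. -/
def mtri (t : TreeData V) (x : V) (r : ℕ) : Set V := t.tri x r ∪ {t.pred^[r] x}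

/-- The modified centred triangular maximal operator `𝒯'`. -/
noncomputable def cmax' (t : TreeData V) (f : V → ℝ) (x : V) : ℝ≥0∞ :=
  ⨆ r : ℕ, t.setAvg (t.mtri x r) f

/-- The modified uncentred triangular maximal operator `𝒰'`. -/
noncomputable def umax' (t : TreeData V) (f : V → ℝ) (x : V) : ℝ≥0∞ :=
  ⨆ (v : V) (r : ℕ) (_ : x ∈ t.mtri v r), t.setAvg (t.mtri v r) f

/-- The `ℓ^p` norm with respect to counting measure, for `p ∈ [1,∞]`. -/
noncomputable def eLp (p : ℝ≥0∞) (g : V → ℝ≥0∞) : ℝ≥0∞ :=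
  if p = ∞ then ⨆ v, g v else (∑' v, g v ^ p.toReal) ^ (1 / p.toReal)

/-- `|f|` as an `ℝ≥0∞`-valued function. -/
noncomputable def nn (f : V → ℝ) (x : V) : ℝ≥0∞ := (‖f x‖₊ : ℝ≥0∞)

/-- The point mass at `o`. -/
noncomputable def delta (o : V) : V → ℝ := ({o} : Set V).indicator fun _ => 1

end TreeData

/-!
For `j ≤ R` the triangle `T_R(s^j o)` contains `o` and has fewer than `b^(R+1)` points, so
`𝒰δ_o > b^(-(R+1))` on its base, a set of `b^R` points at height `ht o + j - R`. These `R + 1`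
bases are disjoint, so `|{𝒰δ_o > α}| ≥ (R + 1) b^R` as soon as `α ≤ b^(-(R+1))`; choosing
`R + 1 = ⌊log_b (1/α)⌋` makes this `≳ (1/α) log (1/α)`, which no bound `C/α` can dominate.
-/

/-- Take `R + 1 = ⌊log_b x⌋`, so that `b^(R+1) ≤ x < b^(R+2)`. -/
lemma exists_pow_le_and_mul_log_le {b : ℕ} (hb : 2 ≤ b) {x : ℝ} (hx : b ≤ x) :
    ∃ R : ℕ, (b : ℝ) ^ (R + 1) ≤ x ∧
      x * Real.log x ≤ 2 * b ^ 2 * Real.log b * ((R + 1) * b ^ R) := by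
  have hb' : (2 : ℝ) ≤ b := by exact_mod_cast hb
  have hx0 : 0 < x := by linarith
  have hfloor : b ≤ ⌊x⌋₊ := Nat.le_floor hx
  obtain ⟨R, hR⟩ : ∃ R, Nat.log b ⌊x⌋₊ = R + 1 :=
    ⟨Nat.log b ⌊x⌋₊ - 1, by have := Nat.log_pos (by omega) hfloor; omega⟩
  have hlower : (b : ℝ) ^ (R + 1) ≤ x :=
    calc (b : ℝ) ^ (R + 1) = ((b ^ Nat.log b ⌊x⌋₊ : ℕ) : ℝ) := by rw [hR, Nat.cast_pow]
      _ ≤ ⌊x⌋₊ := by exact_mod_cast Nat.pow_log_le_self b (by omega)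
      _ ≤ x := Nat.floor_le hx0.le
  have hupper : x ≤ b ^ 2 * b ^ R :=
    calc x ≤ ⌊x⌋₊ + 1 := (Nat.lt_floor_add_one x).le
      _ ≤ ((b ^ (Nat.log b ⌊x⌋₊).succ : ℕ) : ℝ) := by
        exact_mod_cast Nat.lt_pow_succ_log_self (by omega) _
      _ = b ^ 2 * b ^ R := by rw [hR, Nat.succ_eq_add_one]; push_cast; ring
  have hlog : Real.log x ≤ 2 * (R + 1) * Real.log b :=
    calc Real.log x ≤ Real.log (b ^ 2 * b ^ R) := Real.log_le_log hx0 hupper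
      _ = (R + 2) * Real.log b := by rw [← pow_add, Real.log_pow]; push_cast; ring
      _ ≤ 2 * (R + 1) * Real.log b := by gcongr; linarith
  refine ⟨R, hlower, ?_⟩
  calc x * Real.log x ≤ (b ^ 2 * b ^ R) * (2 * (R + 1) * Real.log b) :=
        mul_le_mul hupper hlog (Real.log_nonneg (by linarith)) (by positivity)
    _ = 2 * b ^ 2 * Real.log b * ((R + 1) * b ^ R) := by ring

lemma exists_div_ofReal_lt_ofReal_mul_log {c α₀ : ℝ} (hc : 0 < c) (hα₀ : 0 < α₀) {C : ℝ≥0∞}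
    (hC : C ≠ ∞) :
    ∃ α, 0 < α ∧ α < α₀ ∧
      C / ENNReal.ofReal α < ENNReal.ofReal (c * (1 / α) * Real.log (1 / α)) := by
  have hlog : Filter.Tendsto (fun α : ℝ => c * Real.log (1 / α)) (nhdsWithin 0 (Ioi 0))
      Filter.atTop := by
    simpa only [one_div, Function.comp_def] using
      (Real.tendsto_log_atTop.comp tendsto_inv_nhdsGT_zero).const_mul_atTop hc
  obtain ⟨α, hCα, hα, hαα₀⟩ :=
    ((hlog.eventually_gt_atTop C.toReal).and (Ioo_mem_nhdsGT hα₀)).exists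
  refine ⟨α, hα, hαα₀, ?_⟩
  rw [← ENNReal.ofReal_toReal hC, ← ENNReal.ofReal_div_of_pos hα,
    ENNReal.ofReal_lt_ofReal_iff_of_nonneg (by positivity),
    show c * (1 / α) * Real.log (1 / α) = c * Real.log (1 / α) / α by ring]
  exact div_lt_div_of_pos_right hCα hα

namespace TreeData

variable {V : Type*}

lemma esize_eq_encard (E : Set V) : esize E = E.encard :=
  ENNReal.tsum_set_one E

lemma tsum_nn_delta (o : V) : ∑' x, nn (delta o) x = 1 := by
  rw [tsum_eq_single o fun y hy => by simp [nn, delta, hy]]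
  simp [nn, delta]

variable (t : TreeData V)

lemma ht_iterate_pred (y : V) (j : ℕ) : t.ht (t.pred^[j] y) = t.ht y + j := by
  induction j with
  | zero => simp
  | succ j ih => rw [Function.iterate_succ_apply', t.ht_pred, ih]; push_cast; ring

lemma ht_eq_of_mem_base {x y : V} {R : ℕ} (hy : y ∈ t.base x R) : t.ht x = t.ht y + R := by
  rw [← t.ht_iterate_pred y R, show t.pred^[R] y = x from hy]

lemma disjoint_base_of_ht_ne {x y : V} (hxy : t.ht x ≠ t.ht y) (R : ℕ) :
    Disjoint (t.base x R) (t.base y R) :=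
  Set.disjoint_left.2 fun z hzx hzy =>
    hxy (by rw [t.ht_eq_of_mem_base hzx, t.ht_eq_of_mem_base hzy])

lemma base_succ (x : V) (R : ℕ) : t.base x (R + 1) = ⋃ z ∈ t.base x R, t.succs z := by
  ext y
  simp [base, succs, Function.iterate_succ_apply]

lemma finite_base (x : V) (R : ℕ) : (t.base x R).Finite := by
  induction R with
  | zero => simp [base]
  | succ R ih =>
    rw [t.base_succ]
    exact ih.biUnion fun z _ => t.fiber_finite z

lemma ncard_base {b : ℕ} (hhom : t.Homog b) (x : V) (R : ℕ) : (t.base x R).ncard = b ^ R := by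
  induction R with
  | zero => simp [base]
  | succ R ih =>
    have hdisj : (t.base x R).PairwiseDisjoint t.succs := fun z₁ _ z₂ _ hne =>
      Set.disjoint_left.2 fun y (h₁ : t.pred y = z₁) (h₂ : t.pred y = z₂) => hne (h₁ ▸ h₂)
    rw [t.base_succ,
      (t.finite_base x R).ncard_biUnion (s := t.succs) (fun z _ => t.fiber_finite z) hdisj,
      finsum_mem_congr rfl fun z _ => hhom z,
      finsum_mem_eq_finite_toFinset_sum _ (t.finite_base x R), Finset.sum_const, smul_eq_mul,
      ← Set.ncard_eq_toFinset_card _ (t.finite_base x R), ih, pow_succ]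

lemma tri_eq_biUnion_base (x : V) (R : ℕ) :
    t.tri x R = ⋃ j ∈ Finset.range (R + 1), t.base x j := by
  ext y
  simp [tri, base]

lemma ncard_tri_lt {b : ℕ} (hb : 2 ≤ b) (hhom : t.Homog b) (x : V) (R : ℕ) :
    (t.tri x R).ncard < b ^ (R + 1) :=
  calc (t.tri x R).ncard ≤ ∑ j ∈ Finset.range (R + 1), (t.base x j).ncard := by
        rw [t.tri_eq_biUnion_base]; exact Finset.set_ncard_biUnion_le _ _
    _ = ∑ j ∈ Finset.range (R + 1), b ^ j := by simp only [t.ncard_base hhom]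
    _ < b ^ (R + 1) := Nat.geomSum_lt hb fun _ hk => Finset.mem_range.1 hk

lemma setAvg_delta {o : V} {S : Set V} (ho : o ∈ S) :
    t.setAvg S (delta o) = (S.ncard : ℝ≥0∞)⁻¹ := by
  rw [setAvg, tsum_eq_single ⟨o, ho⟩ fun y hy => by
    simp [delta, Subtype.ext_iff.not.1 hy]]
  simp [delta]

lemma inv_ncard_tri_le_umax_delta {o x v : V} {R : ℕ} (ho : o ∈ t.tri v R)
    (hx : x ∈ t.tri v R) : ((t.tri v R).ncard : ℝ≥0∞)⁻¹ ≤ t.umax (delta o) x := by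
  rw [← t.setAvg_delta ho]
  exact le_iSup₂_of_le v R (le_iSup_of_le hx le_rfl)

lemma lt_umax_delta_of_mem_base {b : ℕ} (hb : 2 ≤ b) (hhom : t.Homog b) {o x : V} {j R : ℕ}
    (hj : j ≤ R) (hx : x ∈ t.base (t.pred^[j] o) R) {α : ℝ≥0∞}
    (hα : α ≤ ((b : ℝ≥0∞) ^ (R + 1))⁻¹) : α < t.umax (delta o) x := by
  have hlt : ((t.tri (t.pred^[j] o) R).ncard : ℝ≥0∞) < (b : ℝ≥0∞) ^ (R + 1) := by
    exact_mod_cast t.ncard_tri_lt hb hhom _ R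
  calc α ≤ ((b : ℝ≥0∞) ^ (R + 1))⁻¹ := hα
    _ < ((t.tri (t.pred^[j] o) R).ncard : ℝ≥0∞)⁻¹ := ENNReal.inv_lt_inv.2 hlt
    _ ≤ t.umax (delta o) x := t.inv_ncard_tri_le_umax_delta ⟨j, hj, rfl⟩ ⟨R, le_rfl, hx⟩

lemma mul_pow_le_esize_umax_delta {b : ℕ} (hb : 2 ≤ b) (hhom : t.Homog b) (o : V) (R : ℕ)
    {α : ℝ≥0∞} (hα : α ≤ ((b : ℝ≥0∞) ^ (R + 1))⁻¹) :
    (((R + 1) * b ^ R : ℕ) : ℝ≥0∞) ≤ esize {x | α < t.umax (delta o) x} := by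
  have hdisj : ((Finset.range (R + 1) : Finset ℕ) : Set ℕ).PairwiseDisjoint
      fun j => t.base (t.pred^[j] o) R := fun i _ j _ hij =>
    t.disjoint_base_of_ht_ne (by simpa [t.ht_iterate_pred] using hij) R
  have hsub : (⋃ j ∈ (Finset.range (R + 1) : Set ℕ), t.base (t.pred^[j] o) R) ⊆
      {x | α < t.umax (delta o) x} := Set.iUnion₂_subset fun j hj x hx =>
    t.lt_umax_delta_of_mem_base hb hhom (Nat.lt_succ_iff.1 (Finset.mem_range.1 hj)) hx hα
  have hcard : (⋃ j ∈ (Finset.range (R + 1) : Set ℕ), t.base (t.pred^[j] o) R).encard =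
      ((R + 1) * b ^ R : ℕ) := by
    rw [(Finset.range (R + 1)).finite_toSet.encard_biUnion hdisj, finsum_mem_coe_finset,
      Finset.sum_congr rfl fun j _ => by
        rw [← (t.finite_base _ R).cast_ncard_eq, t.ncard_base hhom]]
    simp
  rw [esize_eq_encard, ← ENat.toENNReal_coe, ← hcard]
  exact ENat.toENNReal_le.2 (Set.encard_le_encard hsub)

lemma ofReal_mul_log_le_esize_umax_delta {b : ℕ} (hb : 2 ≤ b) (hhom : t.Homog b) (o : V)
    {α : ℝ} (hα : 0 < α) (hαb : α < 1 / b) :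
    ENNReal.ofReal (1 / (2 * b ^ 2 * Real.log b) * (1 / α) * Real.log (1 / α)) ≤
      esize {x | ENNReal.ofReal α < t.umax (delta o) x} := by
  have hlogb : 0 < Real.log b := Real.log_pos (by exact_mod_cast hb)
  obtain ⟨R, hpow, hmul⟩ := exists_pow_le_and_mul_log_le hb
    (x := 1 / α) ((le_div_iff₀ hα).2 (by linarith [(lt_div_iff₀ (by positivity)).1 hαb]))
  have hαpow : ENNReal.ofReal α ≤ ((b : ℝ≥0∞) ^ (R + 1))⁻¹ := by
    rw [← ENNReal.ofReal_natCast, ← ENNReal.ofReal_pow (by positivity),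
      ← ENNReal.ofReal_inv_of_pos (by positivity)]
    exact ENNReal.ofReal_le_ofReal (by rwa [le_inv_comm₀ hα (by positivity), ← one_div])
  refine le_trans ?_ (t.mul_pow_le_esize_umax_delta hb hhom o R hαpow)
  rw [← ENNReal.ofReal_natCast]
  refine ENNReal.ofReal_le_ofReal ?_
  rw [mul_assoc, one_div_mul_eq_div, div_le_iff₀ (by positivity)]
  push_cast
  linarith

end TreeData

/-- On `𝔗_b`, there is `c > 0` with
`|{𝒰δ_o > α}| ≥ c (1/α) log(1/α)` for all sufficiently small `α > 0`; in particular
`𝒰` is not of weak type `(1,1)`. -/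
theorem stmt14 {V : Type*} (t : TreeData V) (b : ℕ) (hb : 2 ≤ b) (hhom : t.Homog b)
    (o : V) :
    (∃ c : ℝ, 0 < c ∧ ∃ α₀ : ℝ, 0 < α₀ ∧ ∀ α : ℝ, 0 < α → α < α₀ →
        ENNReal.ofReal (c * (1 / α) * Real.log (1 / α)) ≤
          TreeData.esize {x | ENNReal.ofReal α < t.umax (TreeData.delta o) x}) ∧
      ¬ ∃ C : ℝ≥0∞, C < ∞ ∧ ∀ (f : V → ℝ) (α : ℝ≥0∞), 0 < α →
          TreeData.esize {x | α < t.umax f x} ≤ C * (∑' x, TreeData.nn f x) / α := by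
  have hc : 0 < 1 / (2 * (b : ℝ) ^ 2 * Real.log b) := by
    have : 0 < Real.log b := Real.log_pos (by exact_mod_cast hb)
    positivity
  have hα₀ : (0 : ℝ) < 1 / b := by positivity
  have hlower := fun α (hα : 0 < α) hαb =>
    t.ofReal_mul_log_le_esize_umax_delta hb hhom o hα hαb
  refine ⟨⟨_, hc, _, hα₀, hlower⟩, ?_⟩
  rintro ⟨C, hC, hweak⟩
  obtain ⟨α, hα, hαb, hlt⟩ := exists_div_ofReal_lt_ofReal_mul_log hc hα₀ hC.ne
  have hweakδ := hweak (TreeData.delta o) (ENNReal.ofReal α) (ENNReal.ofReal_pos.2 hα)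
  rw [TreeData.tsum_nn_delta, mul_one] at hweakδ
  exact ((hlower α hα hαb).trans hweakδ).not_gt hlt
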